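/- Let m ≥ 1 and let e_1,…,e_m be nonnegative integers with e_1 + ⋯ + e_m = m. Then in Q_m the monomial x_1^{e_1}⋯x_m^{e_m} equals either 0 or x_1 x_2 ⋯ x_m; consequently the span of degree-m monomials in Q_m is the one-dimensional ℤ/2-subspace spanned by x_1⋯x_m. -/

import Mathlib

/-!
Iterating the relation `x_j^2 = x_(j-1) x_j` gives `x_j^(b+1) = x_(j-1)^b x_j` for `j ≥ 2` and `x_1^2 = 0`. Induct on `m`
with the stronger claim that a monomial of degree `≥ m` is `0`, or has degree exactly `m` and equals
`x_1 ⋯ x_m`. If `x_m` does not occur, the first `m - 1` variables carry degree `> m - 1` and the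
monomial vanishes; if it occurs as `x_m^(b+1) = x_(m-1)^b x_m`, what is left is a monomial of degree
`≥ m - 1` in the first `m - 1` variables, times `x_m`.
-/

open MvPolynomial Finset
open Fin.NatCast

noncomputable section

/-- The defining ideal of `Q_m`: generated by `x_1^2` and `x_i^2 - x_{i-1} x_i` for `2 ≤ i ≤ m`
(variables are 1-based; `X ((i-1 : ℕ) : Fin m)` is `x_i`). -/
def Qrel (m : ℕ) [NeZero m] : Ideal (MvPolynomial (Fin m) (ZMod 2)) :=
  Ideal.span ((fun i : ℕ =>
      X ((i - 1 : ℕ) : Fin m) ^ 2 -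
        (if i = 1 then 0 else X ((i - 2 : ℕ) : Fin m) * X ((i - 1 : ℕ) : Fin m))) ''
    Set.Icc 1 m)

/-- The ring `Q_m`. -/
abbrev Qring (m : ℕ) [NeZero m] : Type :=
  MvPolynomial (Fin m) (ZMod 2) ⧸ Qrel m

/-- The image of `x_i` (1-based, for `1 ≤ i ≤ m`) in `Q_m`. -/
def xQ (m : ℕ) [NeZero m] (i : ℕ) : Qring m :=
  Ideal.Quotient.mk (Qrel m) (X ((i - 1 : ℕ) : Fin m))

theorem pow_succ_eq_pow_mul_of_sq_eq {M : Type*} [CommMonoid M] {y z : M} (h : z ^ 2 = y * z) :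
    ∀ b : ℕ, z ^ (b + 1) = y ^ b * z
  | 0 => by simp
  | b + 1 => by
    rw [pow_succ, pow_succ_eq_pow_mul_of_sq_eq h b, mul_assoc, ← sq, h, pow_succ, mul_assoc]

theorem Finset.prod_pow_add_single {ι M : Type*} [DecidableEq ι] [CommMonoid M] {s : Finset ι}
    (x : ι → M) (e : ι → ℕ) {j : ι} (hj : j ∈ s) (b : ℕ) :
    ∏ i ∈ s, x i ^ (e + Pi.single j b : ι → ℕ) i = (∏ i ∈ s, x i ^ e i) * x j ^ b := by
  simp only [Pi.add_apply, pow_add, prod_mul_distrib, Pi.single_apply, pow_ite, pow_zero,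
    prod_ite_eq', if_pos hj]

theorem Finset.sum_add_single {ι A : Type*} [DecidableEq ι] [AddCommMonoid A] {s : Finset ι}
    (e : ι → A) {j : ι} (hj : j ∈ s) (b : A) :
    ∑ i ∈ s, (e + Pi.single j b : ι → A) i = ∑ i ∈ s, e i + b := by
  simp [sum_add_distrib, hj]

theorem prod_pow_eq_zero_or_eq_prod {R : Type*} [CommMonoidWithZero R] {x : ℕ → R}
    (hx₁ : x 1 ^ 2 = 0) {m : ℕ} (hm : 1 ≤ m) (hx : ∀ j ∈ Icc 2 m, x j ^ 2 = x (j - 1) * x j)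
    {e : ℕ → ℕ} (he : m ≤ ∑ i ∈ Icc 1 m, e i) :
    ∏ i ∈ Icc 1 m, x i ^ e i = 0 ∨
      (∑ i ∈ Icc 1 m, e i = m ∧ ∏ i ∈ Icc 1 m, x i ^ e i = ∏ i ∈ Icc 1 m, x i) := by
  induction m, hm using Nat.le_induction generalizing e with
  | base =>
    simp only [Icc_self, sum_singleton, prod_singleton] at he ⊢
    obtain h | h := he.eq_or_lt
    · exact .inr ⟨h.symm, by rw [← h, pow_one]⟩
    · exact .inl (pow_eq_zero_of_le h hx₁)
  | succ m hm ih =>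
    have hx' : ∀ j ∈ Icc 2 m, x j ^ 2 = x (j - 1) * x j := fun j hj =>
      hx j (Icc_subset_Icc_right m.le_succ hj)
    rw [sum_Icc_succ_top (by omega)] at he ⊢
    rw [prod_Icc_succ_top (by omega), prod_Icc_succ_top (by omega)]
    rcases hb : e (m + 1) with _ | b <;> rw [hb] at he
    · obtain h | h := ih hx' (e := e) (by omega)
      · exact .inl (by rw [h, zero_mul])
      · omega
    · rw [pow_succ_eq_pow_mul_of_sq_eq (hx (m + 1) (mem_Icc.mpr ⟨by omega, le_rfl⟩)),
        Nat.add_sub_cancel, ← mul_assoc, ← prod_pow_add_single x e (right_mem_Icc.mpr hm)]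
      obtain h | ⟨hsum, hprod⟩ := ih hx' (e := e + Pi.single m b)
        (by rw [sum_add_single e (right_mem_Icc.mpr hm)]; omega)
      · exact .inl (by rw [h, zero_mul])
      · rw [sum_add_single e (right_mem_Icc.mpr hm)] at hsum
        exact .inr ⟨by omega, by rw [hprod]⟩

theorem xQ_sq (m : ℕ) [NeZero m] {i : ℕ} (hi : i ∈ Icc 1 m) :
    xQ m i ^ 2 = if i = 1 then 0 else xQ m (i - 1) * xQ m i := by
  have hrel : Ideal.Quotient.mk (Qrel m) (X ((i - 1 : ℕ) : Fin m) ^ 2 -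
      if i = 1 then 0 else X ((i - 2 : ℕ) : Fin m) * X ((i - 1 : ℕ) : Fin m)) = 0 :=
    Ideal.Quotient.eq_zero_iff_mem.mpr (Ideal.subset_span ⟨i, by simpa using hi, rfl⟩)
  rw [map_sub, sub_eq_zero] at hrel
  split_ifs at hrel ⊢ <;> simpa [xQ, Nat.sub_sub] using hrel

theorem xQ_monomial_eq_zero_or_eq_prod (m : ℕ) [NeZero m] (hm : 1 ≤ m) {e : ℕ → ℕ}
    (he : ∑ i ∈ Icc 1 m, e i = m) :
    ∏ i ∈ Icc 1 m, xQ m i ^ e i = 0 ∨ ∏ i ∈ Icc 1 m, xQ m i ^ e i = ∏ i ∈ Icc 1 m, xQ m i := by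
  have hx₁ : xQ m 1 ^ 2 = 0 := by simpa using xQ_sq m (left_mem_Icc.mpr hm)
  have hx (j : ℕ) (hj : j ∈ Icc 2 m) : xQ m j ^ 2 = xQ m (j - 1) * xQ m j := by
    rw [xQ_sq m (Icc_subset_Icc_left one_le_two hj), if_neg (by simp at hj; omega)]
  exact (prod_pow_eq_zero_or_eq_prod hx₁ hm hx he.ge).imp_right And.right

/-- Every degree-`m` monomial in `Q_m` equals `0` or `x_1 ⋯ x_m`; consequently the span of
the degree-`m` monomials is the `ℤ/2`-subspace spanned by `x_1 ⋯ x_m`. -/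
theorem statement11 (m : ℕ) [NeZero m] (hm : 1 ≤ m) :
    (∀ e : ℕ → ℕ, (∑ i ∈ Finset.Icc 1 m, e i = m) →
      ((∏ i ∈ Finset.Icc 1 m, xQ m i ^ e i) = 0 ∨
        (∏ i ∈ Finset.Icc 1 m, xQ m i ^ e i) = ∏ i ∈ Finset.Icc 1 m, xQ m i)) ∧
    Submodule.span (ZMod 2)
        {q : Qring m | ∃ e : ℕ → ℕ, (∑ i ∈ Finset.Icc 1 m, e i = m) ∧
          q = ∏ i ∈ Finset.Icc 1 m, xQ m i ^ e i} =
      Submodule.span (ZMod 2) {(∏ i ∈ Finset.Icc 1 m, xQ m i)} := by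
  refine ⟨fun e he => xQ_monomial_eq_zero_or_eq_prod m hm he,
    le_antisymm ?_ (Submodule.span_mono ?_)⟩
  · refine (Submodule.span_mono ?_).trans Submodule.span_insert_zero.le
    rintro _ ⟨e, he, rfl⟩
    exact xQ_monomial_eq_zero_or_eq_prod m hm he
  · rintro _ rfl
    exact ⟨fun _ => 1, by simp, by simp⟩
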